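/- arXiv:1406.1578 — 6 statements merged into one kernel-verified Lean document; each statement's English description precedes it below -/
import Mathlib

section
/- Let (L, [·,·], α) be a multiplicative Hom-Lie superalgebra. If D_θ is a generalized α^k-derivation of degree θ and D_μ is a generalized α^s-derivation of degree μ, then the supercommutator [D_θ, D_μ] = D_θ D_μ - (-1)^{θμ} D_μ D_θ is a generalized α^{k+s}-derivation of degree θ+μ, with associated maps [D'_θ, D'_μ] and [D''_θ, D''_μ]. -/
open LinearMap

def ssign (K : Type*) [Field K] (a b : ZMod 2) : K := (-1 : K) ^ (a.val * b.val)

structure HomLieSuper (K L : Type*) [Field K] [AddCommGroup L] [Module K L] where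
  bracket : L →ₗ[K] L →ₗ[K] L
  a : L →ₗ[K] L
  grading : ZMod 2 → Submodule K L
  bracket_mem : ∀ i j : ZMod 2, ∀ x ∈ grading i, ∀ y ∈ grading j,
    bracket x y ∈ grading (i + j)
  a_mem : ∀ i : ZMod 2, ∀ x ∈ grading i, a x ∈ grading i
  skew : ∀ i j : ZMod 2, ∀ x ∈ grading i, ∀ y ∈ grading j,
    bracket x y = - (ssign K i j) • bracket y x
  jacobi : ∀ i j k : ZMod 2, ∀ x ∈ grading i, ∀ y ∈ grading j, ∀ z ∈ grading k,
    ssign K k i • bracket (a x) (bracket y z) +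
    ssign K i j • bracket (a y) (bracket z x) +
    ssign K j k • bracket (a z) (bracket x y) = 0

variable {K L : Type*} [Field K] [AddCommGroup L] [Module K L]

namespace HomLieSuper

/-- α preserves the bracket. -/
def Multiplicative (H : HomLieSuper K L) : Prop :=
  ∀ x y : L, H.a (H.bracket x y) = H.bracket (H.a x) (H.a y)

/-- `D` is homogeneous of degree `θ`. -/
def IsHomog (H : HomLieSuper K L) (θ : ZMod 2) (D : L →ₗ[K] L) : Prop :=
  ∀ i : ZMod 2, ∀ x ∈ H.grading i, D x ∈ H.grading (i + θ)

/-- `D` is a generalized `α^k`-derivation of degree `θ` with associated maps `D'`, `D''`. -/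
def GenDer (H : HomLieSuper K L) (θ : ZMod 2) (k : ℕ) (D D' D'' : L →ₗ[K] L) : Prop :=
  H.IsHomog θ D ∧ H.IsHomog θ D' ∧ H.IsHomog θ D'' ∧
  D * H.a = H.a * D ∧ D' * H.a = H.a * D' ∧ D'' * H.a = H.a * D'' ∧
  ∀ i : ZMod 2, ∀ x ∈ H.grading i, ∀ y : L,
    H.bracket (D x) ((H.a ^ k) y) + ssign K θ i • H.bracket ((H.a ^ k) x) (D' y)
      = D'' (H.bracket x y)

/-- `D` is an `α^k`-quasiderivation of degree `θ` with witness `D'`. -/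
def QDer (H : HomLieSuper K L) (θ : ZMod 2) (k : ℕ) (D D' : L →ₗ[K] L) : Prop :=
  H.GenDer θ k D D D'

/-- `D` is an `α^k`-derivation of degree `θ`. -/
def Der (H : HomLieSuper K L) (θ : ZMod 2) (k : ℕ) (D : L →ₗ[K] L) : Prop :=
  H.QDer θ k D D

/-- `D` belongs to the `α^k`-centroid, with degree `θ`. -/
def Cent (H : HomLieSuper K L) (θ : ZMod 2) (k : ℕ) (D : L →ₗ[K] L) : Prop :=
  H.IsHomog θ D ∧ D * H.a = H.a * D ∧
  ∀ i : ZMod 2, ∀ x ∈ H.grading i, ∀ y : L,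
    H.bracket (D x) ((H.a ^ k) y) = ssign K θ i • H.bracket ((H.a ^ k) x) (D y) ∧
    H.bracket (D x) ((H.a ^ k) y) = D (H.bracket x y)

/-- `D` belongs to the `α^k`-quasicentroid, with degree `θ`. -/
def QC (H : HomLieSuper K L) (θ : ZMod 2) (k : ℕ) (D : L →ₗ[K] L) : Prop :=
  H.IsHomog θ D ∧ D * H.a = H.a * D ∧
  ∀ i : ZMod 2, ∀ x ∈ H.grading i, ∀ y : L,
    H.bracket (D x) ((H.a ^ k) y) = ssign K θ i • H.bracket ((H.a ^ k) x) (D y)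

/-- `D` is a central `α^k`-derivation of degree `θ`. -/
def ZDer (H : HomLieSuper K L) (θ : ZMod 2) (k : ℕ) (D : L →ₗ[K] L) : Prop :=
  H.IsHomog θ D ∧ D * H.a = H.a * D ∧
  ∀ i : ZMod 2, ∀ x ∈ H.grading i, ∀ y : L,
    H.bracket (D x) ((H.a ^ k) y) = 0 ∧ D (H.bracket x y) = 0

/-- Supercommutator of homogeneous endomorphisms of degrees `θ`, `μ`. -/
def scomm (K : Type*) [Field K] {L : Type*} [AddCommGroup L] [Module K L]
    (θ μ : ZMod 2) (D E : L →ₗ[K] L) : L →ₗ[K] L :=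
  D * E - ssign K θ μ • (E * D)

end HomLieSuper


lemma ssign_sq {K : Type*} [Field K] (a b : ZMod 2) : ssign K a b * ssign K a b = 1 := by
  rw [ssign, ← pow_add]
  exact Even.neg_one_pow ⟨a.val * b.val, rfl⟩

lemma ssign_add_left {K : Type*} [Field K] (a b c : ZMod 2) :
    ssign K (a + b) c = ssign K a c * ssign K b c := by
  fin_cases a <;> fin_cases b <;> fin_cases c <;> norm_num [ssign, ZMod.val_one, show ZMod.val (2 : ZMod 2) = 0 from rfl] <;> (rw [← pow_add, neg_one_pow_eq_pow_mod_two (R := K), neg_one_pow_eq_pow_mod_two (R := K) (n := _ + _)]; congr 1)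

lemma ssign_add_right {K : Type*} [Field K] (a b c : ZMod 2) :
    ssign K a (b + c) = ssign K a b * ssign K a c := by
  fin_cases a <;> fin_cases b <;> fin_cases c <;> norm_num [ssign, ZMod.val_one, show ZMod.val (2 : ZMod 2) = 0 from rfl] <;> (rw [← pow_add, neg_one_pow_eq_pow_mod_two (R := K), neg_one_pow_eq_pow_mod_two (R := K) (n := _ + _)]; congr 1)

lemma ssign_comm {K : Type*} [Field K] (a b : ZMod 2) : ssign K a b = ssign K b a := by
  rw [ssign, ssign, Nat.mul_comm]

open HomLieSuper in
theorem stmt1 (H : HomLieSuper K L) (hm : H.Multiplicative)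
    (θ μ : ZMod 2) (k s : ℕ) (D D' D'' E E' E'' : L →ₗ[K] L)
    (hD : H.GenDer θ k D D' D'') (hE : H.GenDer μ s E E' E'') :
    H.GenDer (θ + μ) (k + s) (scomm K θ μ D E) (scomm K θ μ D' E') (scomm K θ μ D'' E'') := by
  obtain ⟨hDh, hD'h, hD''h, hDa, hD'a, hD''a, hDrel⟩ := hD
  obtain ⟨hEh, hE'h, hE''h, hEa, hE'a, hE''a, hErel⟩ := hE
  have comm_pow : ∀ (f : L →ₗ[K] L), f * H.a = H.a * f →
      ∀ n : ℕ, ∀ z : L, f ((H.a ^ n) z) = (H.a ^ n) (f z) := by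
    intro f hf n
    induction n with
    | zero => intro z; simp
    | succ n ih =>
      intro z
      have h1 : f (H.a z) = H.a (f z) := LinearMap.congr_fun hf z
      rw [pow_succ, Module.End.mul_apply, Module.End.mul_apply,
        ← h1, ih]
  have pow_mem : ∀ n : ℕ, ∀ i : ZMod 2, ∀ x ∈ H.grading i,
      (H.a ^ n) x ∈ H.grading i := by
    intro n
    induction n with
    | zero => intro i x hx; simpa using hx
    | succ n ih =>
      intro i x hx
      rw [pow_succ, Module.End.mul_apply]
      exact ih i (H.a x) (H.a_mem i x hx)
  have homog : ∀ (ν ρ : ZMod 2) (F G : L →ₗ[K] L), H.IsHomog ν F → H.IsHomog ρ G →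
      H.IsHomog (ν + ρ) (scomm K ν ρ F G) := by
    intro ν ρ F G hF hG i x hx
    have h1 : F (G x) ∈ H.grading (i + (ν + ρ)) := by
      have h := hF (i + ρ) (G x) (hG i x hx)
      rwa [show i + ρ + ν = i + (ν + ρ) by ring] at h
    have h2 : G (F x) ∈ H.grading (i + (ν + ρ)) := by
      have h := hG (i + ν) (F x) (hF i x hx)
      rwa [show i + ν + ρ = i + (ν + ρ) by ring] at h
    simpa [scomm, LinearMap.sub_apply, LinearMap.smul_apply, Module.End.mul_apply]
      using Submodule.sub_mem _ h1 (Submodule.smul_mem _ _ h2)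
  have comma : ∀ (F G : L →ₗ[K] L), F * H.a = H.a * F → G * H.a = H.a * G →
      scomm K θ μ F G * H.a = H.a * scomm K θ μ F G := by
    intro F G hF hG
    have key : (F * G) * H.a = H.a * (F * G) := by
      rw [mul_assoc, hG, ← mul_assoc, hF, mul_assoc]
    have key2 : (G * F) * H.a = H.a * (G * F) := by
      rw [mul_assoc, hF, ← mul_assoc, hG, mul_assoc]
    simp only [scomm, sub_mul, mul_sub, smul_mul_assoc, mul_smul_comm, key, key2]
  refine ⟨homog θ μ D E hDh hEh, homog θ μ D' E' hD'h hE'h, homog θ μ D'' E'' hD''h hE''h,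
    comma D E hDa hEa, comma D' E' hD'a hE'a, comma D'' E'' hD''a hE''a, ?_⟩
  intro i x hx y
  have hs3 : ssign K θ μ * ssign K θ μ = 1 := ssign_sq θ μ
  have hxs : (H.a ^ s) x ∈ H.grading i := pow_mem s i x hx
  have hxk : (H.a ^ k) x ∈ H.grading i := pow_mem k i x hx
  have A := hDrel (i + μ) (E x) (hEh i x hx) ((H.a ^ s) y)
  have B := hErel i x hx y
  have C := hDrel i ((H.a ^ s) x) hxs (E' y)
  have A' := hErel (i + θ) (D x) (hDh i x hx) ((H.a ^ k) y)
  have B' := hDrel i x hx y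
  have C' := hErel i ((H.a ^ k) x) hxk (D' y)
  have hswap : ∀ z : L, (H.a ^ s) ((H.a ^ k) z) = (H.a ^ k) ((H.a ^ s) z) := by
    intro z
    rw [← Module.End.mul_apply, ← pow_add, add_comm s k, pow_add, Module.End.mul_apply]
  rw [ssign_add_right, ← comm_pow E hEa, comm_pow D' hD'a] at A
  rw [comm_pow D hDa, ← comm_pow E' hE'a] at C
  rw [ssign_add_right, ssign_comm μ θ, hswap] at A'
  rw [hswap] at C'
  have DB := congrArg (fun z => D'' z) B
  simp only [map_add, map_smul] at DB
  have EB' := congrArg (fun z => E'' z) B'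
  simp only [map_add, map_smul] at EB'
  have hks : ∀ z : L, (H.a ^ (k + s)) z = (H.a ^ k) ((H.a ^ s) z) := by
    intro z
    rw [pow_add, Module.End.mul_apply]
  simp only [scomm, LinearMap.sub_apply, LinearMap.smul_apply, Module.End.mul_apply,
    map_sub, map_smul, smul_sub, ssign_add_left, hks, smul_smul]
  have A2 := congrArg (fun z => ssign K θ μ • z) A'
  simp only [smul_add, smul_smul, show ssign K θ μ * (ssign K μ i * ssign K θ μ)
      = ssign K μ i from by rw [mul_comm (ssign K μ i), ← mul_assoc, hs3, one_mul]] at A2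
  linear_combination (norm := module) A + DB + ssign K μ i • C -
    A2 - ssign K θ μ • EB' - (ssign K θ i * ssign K θ μ) • C'
end

section
/- Let (L, [·,·], α) be a multiplicative Hom-Lie superalgebra. If D_θ is a central α^k-derivation of degree θ and D_μ is an α^s-derivation of degree μ, then the supercommutator [D_θ, D_μ] is a central α^{k+s}-derivation of degree θ+μ. Hence ZDer(L) is an ideal of Der(L). -/
open LinearMap

variable {K L : Type*} [Field K] [AddCommGroup L] [Module K L]

section Aux
variable {K L : Type*} [Field K] [AddCommGroup L] [Module K L]

open HomLieSuper

lemma pow_mem_aux (H : HomLieSuper K L) (n : ℕ) (i : ZMod 2) (x : L) (hx : x ∈ H.grading i) :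
    (H.a ^ n) x ∈ H.grading i := by
  induction n with
  | zero => simpa using hx
  | succ m ih =>
    simp only [pow_succ', Module.End.mul_apply]
    exact H.a_mem i _ ih

lemma comm_pow_aux (H : HomLieSuper K L) (D : L →ₗ[K] L) (h : D * H.a = H.a * D) (n : ℕ) :
    ∀ x, D ((H.a ^ n) x) = (H.a ^ n) (D x) := by
  have : D * H.a ^ n = H.a ^ n * D := by
    induction n with
    | zero => simp
    | succ m ih =>
      rw [pow_succ, ← mul_assoc, ih, mul_assoc, h, ← mul_assoc]
  intro x
  exact congrFun (congrArg DFunLike.coe this) x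
end Aux

open HomLieSuper in
theorem stmt3 (H : HomLieSuper K L) (hm : H.Multiplicative)
    (θ μ : ZMod 2) (k s : ℕ) (D E : L →ₗ[K] L)
    (hD : H.ZDer θ k D) (hE : H.Der μ s E) :
    H.ZDer (θ + μ) (k + s) (scomm K θ μ D E) := by
  obtain ⟨hDh, hDa, hDz⟩ := hD
  obtain ⟨hEh, -, -, hEa, -, -, hEd⟩ := hE
  have scomm_apply : ∀ x, scomm K θ μ D E x = D (E x) - ssign K θ μ • E (D x) := by
    intro x; simp [scomm, mul_comm]
  refine ⟨?_, ?_, ?_⟩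
  · intro i x hx
    rw [scomm_apply]
    have h1 : D (E x) ∈ H.grading (i + (θ + μ)) := by
      have hi : i + (θ + μ) = (i + μ) + θ := by ring
      rw [hi]
      exact hDh (i + μ) (E x) (hEh i x hx)
    have h2 : E (D x) ∈ H.grading (i + (θ + μ)) := by
      have hi : i + (θ + μ) = (i + θ) + μ := by ring
      rw [hi]
      exact hEh (i + θ) (D x) (hDh i x hx)
    exact Submodule.sub_mem _ h1 (Submodule.smul_mem _ _ h2)
  · have h1 : (D * E) * H.a = H.a * (D * E) := by
      rw [mul_assoc, hEa, ← mul_assoc, hDa, mul_assoc]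
    have h2 : (E * D) * H.a = H.a * (E * D) := by
      rw [mul_assoc, hDa, ← mul_assoc, hEa, mul_assoc]
    unfold scomm
    rw [sub_mul, mul_sub, smul_mul_assoc, mul_smul_comm, h1, h2]
  · intro i x hx y
    constructor
    · rw [scomm_apply]
      have e1 : H.bracket (D (E x)) ((H.a ^ (k + s)) y) = 0 := by
        have hy : (H.a ^ (k + s)) y = (H.a ^ k) ((H.a ^ s) y) := by
          rw [pow_add]; rfl
        rw [hy]
        exact (hDz (i + μ) (E x) (hEh i x hx) ((H.a ^ s) y)).1
      have e2 : H.bracket (E (D x)) ((H.a ^ (k + s)) y) = 0 := by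
        have hid := hEd (i + θ) (D x) (hDh i x hx) ((H.a ^ k) y)
        have hz1 : H.bracket (D x) ((H.a ^ k) y) = 0 := (hDz i x hx y).1
        rw [hz1, map_zero] at hid
        have hc1 : (H.a ^ s) (D x) = D ((H.a ^ s) x) :=
          (comm_pow_aux H D hDa s x).symm
        have hc2 : E ((H.a ^ k) y) = (H.a ^ k) (E y) :=
          comm_pow_aux H E hEa k y
        rw [hc1, hc2] at hid
        have hz2 : H.bracket (D ((H.a ^ s) x)) ((H.a ^ k) (E y)) = 0 :=
          (hDz i ((H.a ^ s) x) (pow_mem_aux H s i x hx) (E y)).1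
        rw [hz2, smul_zero, add_zero] at hid
        have hy : (H.a ^ (k + s)) y = (H.a ^ s) ((H.a ^ k) y) := by
          rw [add_comm, pow_add]; rfl
        rw [hy, hid]
      simp [map_sub, map_smul, e1, e2]
    · rw [scomm_apply]
      have hz : D (H.bracket x y) = 0 := (hDz i x hx y).2
      rw [hz, map_zero, smul_zero, sub_zero]
      have hid := hEd i x hx y
      rw [← hid, map_add, map_smul]
      have e1 : D (H.bracket (E x) ((H.a ^ s) y)) = 0 :=
        (hDz (i + μ) (E x) (hEh i x hx) ((H.a ^ s) y)).2
      have e2 : D (H.bracket ((H.a ^ s) x) (E y)) = 0 :=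
        (hDz i ((H.a ^ s) x) (pow_mem_aux H s i x hx) (E y)).2
      rw [e1, e2, smul_zero, add_zero]
end

section
/- Let (L, [·,·], α) be a multiplicative Hom-Lie superalgebra. If D_θ is an α^k-quasiderivation of degree θ and D_μ belongs to the α^s-quasicentroid of degree μ, then the supercommutator [D_θ, D_μ] belongs to the α^{k+s}-quasicentroid. In other words, [QDer(L), QC(L)] ⊆ QC(L). -/
open LinearMap

variable {K L : Type*} [Field K] [AddCommGroup L] [Module K L]

lemma zmod2_cases : ∀ a : ZMod 2, a = 0 ∨ a = 1 := by decide

open HomLieSuper in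
theorem stmt5 (H : HomLieSuper K L) (hm : H.Multiplicative)
    (θ μ : ZMod 2) (k s : ℕ) (D D' E : L →ₗ[K] L)
    (hD : H.QDer θ k D D') (hE : H.QC μ s E) :
    H.QC (θ + μ) (k + s) (scomm K θ μ D E) := by
  obtain ⟨hD1, -, hD3, hDa, -, hD'a, hDm⟩ := hD
  obtain ⟨hE1, hEa, hEm⟩ := hE
  have hmem : ∀ n (i : ZMod 2), ∀ x ∈ H.grading i, (H.a ^ n) x ∈ H.grading i := by
    intro n
    induction n with
    | zero => intro i x hx; simpa using hx
    | succ n ih =>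
        intro i x hx
        rw [pow_succ, Module.End.mul_apply]
        exact ih i _ (H.a_mem i x hx)
  have hDc : ∀ n z, (H.a ^ n) (D z) = D ((H.a ^ n) z) := by
    intro n z
    have c : Commute D H.a := hDa
    simpa [Module.End.mul_apply] using (DFunLike.congr_fun (c.pow_right n) z).symm
  have hEc : ∀ n z, (H.a ^ n) (E z) = E ((H.a ^ n) z) := by
    intro n z
    have c : Commute E H.a := hEa
    simpa [Module.End.mul_apply] using (DFunLike.congr_fun (c.pow_right n) z).symm
  have hks : ∀ z : L, (H.a ^ k) ((H.a ^ s) z) = (H.a ^ (k + s)) z := by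
    intro z; rw [← Module.End.mul_apply, ← pow_add]
  have hsk : ∀ z : L, (H.a ^ s) ((H.a ^ k) z) = (H.a ^ (k + s)) z := by
    intro z; rw [← Module.End.mul_apply, ← pow_add, add_comm]
  have hsc : ∀ z : L, scomm K θ μ D E z = D (E z) - ssign K θ μ • E (D z) := by
    intro z; simp [scomm, Module.End.mul_apply]
  refine ⟨?_, ?_, ?_⟩
  · -- homogeneity
    intro i x hx
    have h1 : D (E x) ∈ H.grading (i + μ + θ) := hD1 (i + μ) (E x) (hE1 i x hx)
    have h2 : E (D x) ∈ H.grading (i + θ + μ) := hE1 (i + θ) (D x) (hD1 i x hx)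
    have e1 : i + μ + θ = i + (θ + μ) := by ring
    have e2 : i + θ + μ = i + (θ + μ) := by ring
    rw [hsc x]
    exact Submodule.sub_mem _ (e1 ▸ h1) (Submodule.smul_mem _ _ (e2 ▸ h2))
  · -- commutes with α
    have h1 : D * E * H.a = H.a * (D * E) := by
      rw [mul_assoc, hEa, ← mul_assoc, hDa, mul_assoc]
    have h2 : E * D * H.a = H.a * (E * D) := by
      rw [mul_assoc, hDa, ← mul_assoc, hEa, mul_assoc]
    show scomm K θ μ D E * H.a = H.a * scomm K θ μ D E
    simp only [scomm, sub_mul, mul_sub, smul_mul_assoc, mul_smul_comm, h1, h2]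
  · -- the quasicentroid identity
    intro i x hx y
    have hEx : E x ∈ H.grading (i + μ) := hE1 i x hx
    have hDx : D x ∈ H.grading (i + θ) := hD1 i x hx
    have hakx : (H.a ^ k) x ∈ H.grading i := hmem k i x hx
    have hasx : (H.a ^ s) x ∈ H.grading i := hmem s i x hx
    -- e1: quasiderivation applied to (E x, α^s y)
    have e1 := hDm (i + μ) (E x) hEx ((H.a ^ s) y)
    rw [hks y, hEc k x, ← hDc s y] at e1
    -- e2: quasicentroid applied to (x, y)
    have e2 := hEm i x hx y
    -- e3: quasicentroid applied to (α^k x, D y)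
    have e3 := hEm i ((H.a ^ k) x) hakx (D y)
    rw [hsk x] at e3
    -- e4: quasiderivation applied to (α^s x, E y)
    have e4 := hDm i ((H.a ^ s) x) hasx (E y)
    rw [← hDc s x, hEc k y, hks x] at e4
    -- e5: quasicentroid applied to (D x, α^k y)
    have e5 := hEm (i + θ) (D x) hDx ((H.a ^ k) y)
    rw [hsk y] at e5
    have hsq : ssign K μ (i + θ) * ssign K μ (i + θ) = 1 := by
      rcases zmod2_cases μ with rfl | rfl <;> rcases zmod2_cases (i + θ) with h | h <;>
        rw [h] <;>
        norm_num [ssign, ZMod.val_one, ZMod.val_zero]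
    have t1 : H.bracket (D (E x)) ((H.a ^ (k + s)) y)
        = D' (H.bracket (E x) ((H.a ^ s) y))
          - ssign K θ (i + μ) • H.bracket (E ((H.a ^ k) x)) ((H.a ^ s) (D y)) :=
      eq_sub_of_add_eq e1
    have t2 : D' (H.bracket (E x) ((H.a ^ s) y))
        = ssign K μ i • D' (H.bracket ((H.a ^ s) x) (E y)) := by
      rw [e2, map_smul]
    have t4 : D' (H.bracket ((H.a ^ s) x) (E y))
        = H.bracket ((H.a ^ s) (D x)) (E ((H.a ^ k) y))
          + ssign K θ i • H.bracket ((H.a ^ (k + s)) x) (D (E y)) := e4.symm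
    have t5 : H.bracket ((H.a ^ s) (D x)) (E ((H.a ^ k) y))
        = ssign K μ (i + θ) • H.bracket (E (D x)) ((H.a ^ (k + s)) y) := by
      rw [e5, smul_smul, hsq, one_smul]
    have main : H.bracket (D (E x)) ((H.a ^ (k + s)) y)
        = ssign K μ i • (ssign K μ (i + θ) • H.bracket (E (D x)) ((H.a ^ (k + s)) y)
            + ssign K θ i • H.bracket ((H.a ^ (k + s)) x) (D (E y)))
          - ssign K θ (i + μ) •
            (ssign K μ i • H.bracket ((H.a ^ (k + s)) x) (E (D y))) := by
      rw [t1, t2, t4, t5, e3]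
    rw [hsc x, hsc y]
    simp only [map_sub, map_smul, LinearMap.sub_apply, LinearMap.smul_apply]
    rw [main]
    match_scalars <;>
      (rcases zmod2_cases θ with rfl | rfl <;>
       rcases zmod2_cases μ with rfl | rfl <;>
       rcases zmod2_cases i with rfl | rfl <;>
       norm_num [ssign, ZMod.val_one, ZMod.val_zero,
         show ((1 : ZMod 2) + 1) = 0 by decide,
         show ZMod.val (2 : ZMod 2) = 0 by decide])
end

section
/- Let (L, [·,·], α) be a multiplicative Hom-Lie superalgebra. If D_θ belongs to the α^k-quasicentroid of degree θ and D_μ belongs to the α^s-quasicentroid of degree μ, then the supercommutator [D_θ, D_μ] is an α^{k+s}-quasiderivation (with associated map D' = 0). In other words, [QC(L), QC(L)] ⊆ QDer(L). -/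
open LinearMap

variable {K L : Type*} [Field K] [AddCommGroup L] [Module K L]

lemma ssignA (θ μ i : ZMod 2) :
    ssign K θ (i+μ) * ssign K μ i = ssign K (θ+μ) i * ssign K θ μ := by
  fin_cases θ <;> fin_cases μ <;> fin_cases i <;>
    simp (config := {decide := true}) [ssign, show ((2:ZMod 2)) = 0 from rfl, show ((1:ZMod 2)).val = 1 from rfl, ZMod.val]

lemma ssignB (θ μ i : ZMod 2) :
    ssign K θ μ * (ssign K μ (i+θ) * ssign K θ i) = ssign K (θ+μ) i := by
  fin_cases θ <;> fin_cases μ <;> fin_cases i <;>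
    simp (config := {decide := true}) [ssign, show ((2:ZMod 2)) = 0 from rfl, show ((1:ZMod 2)).val = 1 from rfl, ZMod.val]

open HomLieSuper in
theorem stmt6 (H : HomLieSuper K L) (hm : H.Multiplicative)
    (θ μ : ZMod 2) (k s : ℕ) (D E : L →ₗ[K] L)
    (hD : H.QC θ k D) (hE : H.QC μ s E) :
    H.QDer (θ + μ) (k + s) (scomm K θ μ D E) 0 := by
  obtain ⟨hDh, hDa, hDqc⟩ := hD
  obtain ⟨hEh, hEa, hEqc⟩ := hE
  have hcD : Commute D H.a := hDa
  have hcE : Commute E H.a := hEa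
  have hDpow : ∀ (n : ℕ) (z : L), D ((H.a ^ n) z) = (H.a ^ n) (D z) := fun n z =>
    LinearMap.congr_fun (hcD.pow_right n) z
  have hEpow : ∀ (n : ℕ) (z : L), E ((H.a ^ n) z) = (H.a ^ n) (E z) := fun n z =>
    LinearMap.congr_fun (hcE.pow_right n) z
  have hamem : ∀ (n : ℕ) (i : ZMod 2), ∀ x ∈ H.grading i, (H.a ^ n) x ∈ H.grading i := by
    intro n
    induction n with
    | zero => intro i x hx; simpa using hx
    | succ n ih =>
        intro i x hx
        rw [pow_succ]
        exact ih i (H.a x) (H.a_mem i x hx)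
  have hFcomm : (scomm K θ μ D E) * H.a = H.a * (scomm K θ μ D E) :=
    ((hcD.mul_left hcE).sub_left ((hcE.mul_left hcD).smul_left _))
  have hFhom : H.IsHomog (θ + μ) (scomm K θ μ D E) := by
    intro i x hx
    have h1 : D (E x) ∈ H.grading (i + (θ + μ)) := by
      have := hDh (i + μ) (E x) (hEh i x hx)
      rwa [show i + μ + θ = i + (θ + μ) by ring] at this
    have h2 : E (D x) ∈ H.grading (i + (θ + μ)) := by
      have := hEh (i + θ) (D x) (hDh i x hx)
      rwa [show i + θ + μ = i + (θ + μ) by ring] at this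
    simpa [scomm] using Submodule.sub_mem _ h1 (Submodule.smul_mem _ _ h2)
  refine ⟨hFhom, hFhom, ?_, hFcomm, hFcomm, by simp, ?_⟩
  · intro i x hx; simpa using Submodule.zero_mem _
  intro i x hx y
  have hy1 : (H.a ^ (k + s)) y = (H.a ^ k) ((H.a ^ s) y) := by
    rw [pow_add]; rfl
  have hy2 : (H.a ^ (k + s)) y = (H.a ^ s) ((H.a ^ k) y) := by
    rw [add_comm k s, pow_add]; rfl
  have hx1 : (H.a ^ s) ((H.a ^ k) x) = (H.a ^ (k + s)) x := by
    rw [add_comm k s, pow_add]; rfl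
  have hx2 : (H.a ^ k) ((H.a ^ s) x) = (H.a ^ (k + s)) x := by
    rw [pow_add]; rfl
  have step1 : H.bracket (D (E x)) ((H.a ^ (k + s)) y)
      = (ssign K θ (i + μ) * ssign K μ i) • H.bracket ((H.a ^ (k + s)) x) (E (D y)) := by
    rw [hy1, hDqc (i + μ) (E x) (hEh i x hx) ((H.a ^ s) y), ← hEpow k x, hDpow s y,
      hEqc i ((H.a ^ k) x) (hamem k i x hx) (D y), hx1, smul_smul]
  have step2 : H.bracket (E (D x)) ((H.a ^ (k + s)) y)
      = (ssign K μ (i + θ) * ssign K θ i) • H.bracket ((H.a ^ (k + s)) x) (D (E y)) := by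
    rw [hy2, hEqc (i + θ) (D x) (hDh i x hx) ((H.a ^ k) y), ← hDpow s x, hEpow k y,
      hDqc i ((H.a ^ s) x) (hamem s i x hx) (E y), hx2, smul_smul]
  simp only [scomm, LinearMap.sub_apply, LinearMap.smul_apply, Module.End.mul_apply,
    LinearMap.zero_apply, map_sub, map_smul, LinearMap.map_sub₂, LinearMap.map_smul₂]
  rw [step1, step2, ssignA, smul_smul, ssignB, smul_sub, smul_smul]
  abel
end

section
/- Let (L, [·,·], α) be a multiplicative Hom-Lie superalgebra with α surjective and Z(L) = {0}, and let L̆ = Lt ⊕ Lt² with bracket [x t^i, y t^j] = [x,y]t^{i+j}. Then the center of L̆ equals Lt². -/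
open LinearMap

variable {K L : Type*} [Field K] [AddCommGroup L] [Module K L]

namespace HomLieSuper

/-- The bracket of `L̆ = Lt ⊕ Lt²`, encoding `xt + yt²` as `(x, y)`:
`[x t^i, y t^j] = [x,y] t^{i+j}` (zero when `i + j ≥ 3`). -/
def breveBracket (H : HomLieSuper K L) : (L × L) →ₗ[K] (L × L) →ₗ[K] (L × L) :=
  LinearMap.mk₂ K (fun x y => ((0 : L), H.bracket x.1 y.1))
    (by intro x x' y; simp [Prod.ext_iff])
    (by intro c x y; simp [Prod.ext_iff])
    (by intro x y y'; simp [Prod.ext_iff])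
    (by intro c x y; simp [Prod.ext_iff])

/-- The twisting map `ᾰ` of `L̆`. -/
def breveA (H : HomLieSuper K L) : (L × L) →ₗ[K] (L × L) :=
  (H.a).prodMap H.a

/-- The grading of `L̆`. -/
def breveGrading (H : HomLieSuper K L) (i : ZMod 2) : Submodule K (L × L) :=
  (H.grading i).prod (H.grading i)

/-- The `Z₂`-graded span of brackets, `[L, L]`. -/
def derived (H : HomLieSuper K L) : Submodule K L :=
  Submodule.span K {z : L | ∃ x y : L, z = H.bracket x y}

/-- The map `φ(D)(at + bt² + ut²) = D(a) t + D'(b) t²`, where `b` is the projection of the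
`t²`-component onto `[L,L]` along the complement `U`. -/
noncomputable def phi (H : HomLieSuper K L) (U : Submodule K L) (hU : IsCompl H.derived U)
    (D D' : L →ₗ[K] L) : (L × L) →ₗ[K] (L × L) :=
  LinearMap.prod (D ∘ₗ LinearMap.fst K L L)
    (D' ∘ₗ (H.derived).subtype ∘ₗ
      (Submodule.linearProjOfIsCompl H.derived U hU) ∘ₗ LinearMap.snd K L L)

/-- `g` is an `ᾰ^k`-derivation of `L̆` of degree `θ`. -/
def breveDer (H : HomLieSuper K L) (θ : ZMod 2) (k : ℕ) (g : (L × L) →ₗ[K] (L × L)) : Prop :=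
  (∀ i : ZMod 2, ∀ X ∈ H.breveGrading i, g X ∈ H.breveGrading (i + θ)) ∧
  g * H.breveA = H.breveA * g ∧
  ∀ i : ZMod 2, ∀ X ∈ H.breveGrading i, ∀ Y : L × L,
    g (H.breveBracket X Y) =
      H.breveBracket (g X) ((H.breveA ^ k) Y) +
        ssign K θ i • H.breveBracket ((H.breveA ^ k) X) (g Y)

/-- `g` is a central `ᾰ^k`-derivation of `L̆` of degree `θ`. -/
def breveZDer (H : HomLieSuper K L) (θ : ZMod 2) (k : ℕ) (g : (L × L) →ₗ[K] (L × L)) : Prop :=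
  (∀ i : ZMod 2, ∀ X ∈ H.breveGrading i, g X ∈ H.breveGrading (i + θ)) ∧
  g * H.breveA = H.breveA * g ∧
  ∀ i : ZMod 2, ∀ X ∈ H.breveGrading i, ∀ Y : L × L,
    H.breveBracket (g X) ((H.breveA ^ k) Y) = 0 ∧ g (H.breveBracket X Y) = 0

end HomLieSuper

open HomLieSuper in
theorem stmt16 (H : HomLieSuper K L) (hm : H.Multiplicative)
    (hsurj : Function.Surjective H.a)
    (hz : ∀ z : L, (∀ y : L, H.bracket z y = 0) → z = 0) :
    ∀ X : L × L, (∀ Y : L × L, H.breveBracket X Y = 0) ↔ X.1 = 0 := by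
  intro X
  constructor
  · intro h
    apply hz
    intro y
    have := h (y, 0)
    simpa [breveBracket, Prod.ext_iff] using this
  · intro h Y
    simp [breveBracket, h, Prod.ext_iff]
end

section
/- Let L be the 3-dimensional Hom-Lie algebra over a field K with basis {x₁, x₂, x₃}, bracket [x₁,x₂] = x₁, [x₁,x₃] = x₂, [x₂,x₃] = 2x₃ (extended skew-symmetrically), and α(x₁) = x₁, α(x₂) = 2x₂, α(x₃) = 2x₃. For fixed k ≥ 1, define D(x₁) = x₁, D(x₂) = 2^k x₂, D(x₃) = 2^k x₃. Then D belongs to QDer(L) ∩ QC(L) (it is an α^k-quasiderivation with witness D'(x₁) = 2^{k+1}x₁, D'(x₂) = 2^{k+1}x₂, D'(x₃) = 2^{k+1}·2^k x₃, and lies in the α^k-quasicentroid) but D does not belong to the centroid C(L), i.e., D([x₁, y]) ≠ [α^t(x₁), D(y)] for some y and every t. -/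
/-- The bracket of the 3-dimensional Hom-Lie algebra of Example 2.5:
`[x₁,x₂] = x₁`, `[x₁,x₃] = x₂`, `[x₂,x₃] = 2x₃`, extended bilinearly and
skew-symmetrically, where `x₁ = e 0`, `x₂ = e 1`, `x₃ = e 2`. -/
def exBr (K : Type*) [Field K] (u v : Fin 3 → K) : Fin 3 → K :=
  ![u 0 * v 1 - u 1 * v 0, u 0 * v 2 - u 2 * v 0, 2 * (u 1 * v 2 - u 2 * v 1)]

/-- The twisting map: `α(x₁) = x₁`, `α(x₂) = 2x₂`, `α(x₃) = 2x₃`. -/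
def exAl (K : Type*) [Field K] (u : Fin 3 → K) : Fin 3 → K :=
  ![u 0, 2 * u 1, 2 * u 2]

/-- `D(x₁) = x₁`, `D(x₂) = 2^k x₂`, `D(x₃) = 2^k x₃`. -/
def exD (K : Type*) [Field K] (k : ℕ) (u : Fin 3 → K) : Fin 3 → K :=
  ![u 0, 2 ^ k * u 1, 2 ^ k * u 2]

/-- The witness `D'(x₁) = 2^{k+1} x₁`, `D'(x₂) = 2^{k+1} x₂`, `D'(x₃) = 2^{k+1}·2^k x₃`. -/
def exD' (K : Type*) [Field K] (k : ℕ) (u : Fin 3 → K) : Fin 3 → K :=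
  ![2 ^ (k + 1) * u 0, 2 ^ (k + 1) * u 1, 2 ^ (k + 1) * 2 ^ k * u 2]


lemma exAl_iter (K : Type*) [Field K] (k : ℕ) (u : Fin 3 → K) :
    (exAl K)^[k] u = ![u 0, 2 ^ k * u 1, 2 ^ k * u 2] := by
  induction k generalizing u with
  | zero => funext i; fin_cases i <;> simp
  | succ n ih =>
      rw [Function.iterate_succ_apply, ih]
      funext i; fin_cases i <;> simp [exAl] <;> ring

/-- `D ∈ QC_{α^k}(L)`, `D ∈ QDer_{α^k}(L)` with witness `D'`, but for every `t`,
`D ∉ C_{α^t}(L)`: some `y` has `D([x₁,y]) ≠ [α^t(x₁), D(y)]`. -/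
theorem stmt18 (K : Type*) [Field K] [CharZero K] (k : ℕ) (hk : 1 ≤ k) :
    (∀ u v : Fin 3 → K, exBr K (exD K k u) ((exAl K)^[k] v)
        = exBr K ((exAl K)^[k] u) (exD K k v)) ∧
    (∀ u v : Fin 3 → K, exBr K (exD K k u) ((exAl K)^[k] v)
        + exBr K ((exAl K)^[k] u) (exD K k v) = exD' K k (exBr K u v)) ∧
    (∀ t : ℕ, ∃ y : Fin 3 → K,
      exD K k (exBr K ![1, 0, 0] y) ≠ exBr K ((exAl K)^[t] ![1, 0, 0]) (exD K k y)) := by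
  refine ⟨?_, ?_, ?_⟩
  · intro u v
    rw [exAl_iter, exAl_iter]
    funext i; fin_cases i <;> simp [exBr, exD] <;> ring
  · intro u v
    rw [exAl_iter, exAl_iter]
    funext i; fin_cases i <;>
      simp [exBr, exD, exD', Pi.add_apply, pow_succ] <;> ring
  · intro t
    refine ⟨![0, 1, 0], fun h => ?_⟩
    rw [exAl_iter] at h
    have h0 := congrFun h 0
    simp [exBr, exD] at h0
    have h1 : ((2 ^ k : ℕ) : K) = ((1 : ℕ) : K) := by exact_mod_cast h0.symm
    have := Nat.cast_injective h1
    have := Nat.one_lt_two_pow_iff.mpr (by omega : k ≠ 0)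
    omega
end
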